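/- For every integer m ≥ 1 there exists C > 0 such that for all ε ∈ (0,1] and all Λ ≥ 1: ε^{2(m−1)}·( Σ_{ℓ∈ℤ³, |ℓ| > Λ/ε} ⟨ℓ⟩^{−4} )·( Σ_{ℓ∈ℤ³} ⟨ℓ⟩_ε^{−2} )^{2m−1} ≤ C/Λ. -/

import Mathlib

open Real

/-- sup-norm of a lattice point, as a natural number. -/
def nsup (ℓ : Fin 3 → ℤ) : ℕ := Finset.univ.sup fun i => (ℓ i).natAbs

noncomputable def box (n : ℕ) : Finset (Fin 3 → ℤ) := Fintype.piFinset fun _ => Finset.Icc (-(n:ℤ)) (n:ℤ)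

lemma mem_box {ℓ : Fin 3 → ℤ} {n : ℕ} : ℓ ∈ box n ↔ nsup ℓ ≤ n := by
  simp only [box, Fintype.mem_piFinset, Finset.mem_Icc, nsup, Finset.sup_le_iff,
    Finset.mem_univ, true_implies]
  constructor
  · intro h i; have := h i; omega
  · intro h i; have := h i; omega

lemma card_box (n : ℕ) : (box n).card = (2*n+1)^3 := by
  have h : ((n:ℤ) + 1 - -(n:ℤ)).toNat = 2*n+1 := by omega
  rw [box, Fintype.card_piFinset]
  simp only [Int.card_Icc]
  norm_num
  omega

lemma card_shell (n : ℕ) (s : Finset (Fin 3 → ℤ)) (hs : ∀ ℓ ∈ s, nsup ℓ = n) :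
    s.card ≤ 27 * (n+1)^2 := by
  cases n with
  | zero =>
      have hsub : s ⊆ box 0 := fun ℓ hℓ => mem_box.mpr (le_of_eq (hs ℓ hℓ))
      have := Finset.card_le_card hsub
      rw [card_box] at this
      omega
  | succ m =>
      have hsub : s ⊆ box (m+1) \ box m := by
        intro ℓ hℓ
        rw [Finset.mem_sdiff, mem_box, mem_box, hs ℓ hℓ]
        omega
      have hbb : box m ⊆ box (m+1) := fun ℓ h => mem_box.mpr (le_trans (mem_box.mp h) (by omega))
      have hc : (box (m+1) \ box m).card = (2*(m+1)+1)^3 - (2*m+1)^3 := by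
        rw [Finset.card_sdiff_of_subset hbb, card_box, card_box]
      have hle := Finset.card_le_card hsub
      rw [hc] at hle
      have key : (2*(m+1)+1)^3 ≤ (2*m+1)^3 + 27*(m+1+1)^2 := by zify; nlinarith [Int.natCast_nonneg m]
      omega

lemma shell_sum_le (f : (Fin 3 → ℤ) → ℝ) (g : ℕ → ℝ) (hg0 : ∀ n, 0 ≤ g n) (A : ℝ)
    (hbound : ∀ t : Finset ℕ, ∑ n ∈ t, 27*((n:ℝ)+1)^2 * g n ≤ A)
    (s : Finset (Fin 3 → ℤ)) (hfg : ∀ ℓ ∈ s, f ℓ ≤ g (nsup ℓ)) :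
    ∑ ℓ ∈ s, f ℓ ≤ A := by
  classical
  set M := s.sup nsup with hM
  have hsub : s ⊆ box M := fun ℓ hℓ => mem_box.mpr (Finset.le_sup hℓ)
  calc ∑ ℓ ∈ s, f ℓ ≤ ∑ ℓ ∈ s, g (nsup ℓ) := Finset.sum_le_sum hfg
    _ ≤ ∑ ℓ ∈ box M, g (nsup ℓ) :=
        Finset.sum_le_sum_of_subset_of_nonneg hsub (fun ℓ _ _ => hg0 _)
    _ = ∑ b ∈ (box M).image nsup, ((box M).filter (fun a => nsup a = b)).card • g b :=
        Finset.sum_comp g nsup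
    _ ≤ ∑ b ∈ (box M).image nsup, 27*((b:ℝ)+1)^2 * g b := by
        apply Finset.sum_le_sum
        intro b _
        rw [nsmul_eq_mul]
        apply mul_le_mul_of_nonneg_right _ (hg0 b)
        have hcard : ((box M).filter (fun a => nsup a = b)).card ≤ 27*(b+1)^2 :=
          card_shell b _ (fun ℓ hℓ => (Finset.mem_filter.mp hℓ).2)
        calc ((((box M).filter (fun a => nsup a = b)).card : ℕ) : ℝ)
            ≤ ((27*(b+1)^2 : ℕ) : ℝ) := by exact_mod_cast hcard
          _ = 27*((b:ℝ)+1)^2 := by push_cast; ring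
    _ ≤ A := hbound _

lemma rpow_tele {x η : ℝ} (hx : 1 ≤ x) (hη : 0 < η) (hη1 : η ≤ 1) :
    x ^ (-(1+η)) ≤ (2/η) * (x ^ (-η) - (x+1) ^ (-η)) := by
  have hx0 : (0:ℝ) < x := lt_of_lt_of_le one_pos hx
  have hx10 : (0:ℝ) < x + 1 := by linarith
  have key : (x/(x+1)) ^ η ≤ 1 - η/(x+1) := by
    have h := Real.geom_mean_le_arith_mean2_weighted (by linarith : (0:ℝ) ≤ 1 - η)
      hη.le zero_le_one (div_pos hx0 hx10).le (by ring)
    rw [Real.one_rpow, one_mul] at h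
    have he : (1-η)*1 + η*(x/(x+1)) = 1 - η/(x+1) := by field_simp; ring
    linarith [h.trans_eq he]
  have hxm : (0:ℝ) < x^(-η) := Real.rpow_pos_of_pos hx0 _
  have hsplit : (x+1)^(-η) = x^(-η) * (x/(x+1))^η := by
    rw [Real.div_rpow hx0.le hx10.le, Real.rpow_neg hx0.le, Real.rpow_neg hx10.le]
    have h1 : x ^ η ≠ 0 := (Real.rpow_pos_of_pos hx0 η).ne'
    have h2 : (x+1) ^ η ≠ 0 := (Real.rpow_pos_of_pos hx10 η).ne'
    field_simp
  have h1 : x^(-η) * (η/(x+1)) ≤ x^(-η) - (x+1)^(-η) := by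
    rw [hsplit]
    nlinarith [mul_le_mul_of_nonneg_left key hxm.le]
  have hpow : x^(-(1+η)) = x^(-η) * x⁻¹ := by
    rw [← Real.rpow_neg_one x, ← Real.rpow_add hx0]
    ring_nf
  have h2 : (η/2) * x^(-(1+η)) ≤ x^(-η) * (η/(x+1)) := by
    rw [hpow]
    have hd : (η/2) * x⁻¹ ≤ η/(x+1) := by
      have he : (η/2) * x⁻¹ = η/(2*x) := by field_simp
      rw [he, div_le_div_iff₀ (by positivity) hx10]
      nlinarith
    nlinarith [hxm]
  have hcomb : (η/2) * x^(-(1+η)) ≤ x^(-η) - (x+1)^(-η) := h2.trans h1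
  calc x^(-(1+η)) = (2/η)*((η/2)*x^(-(1+η))) := by field_simp
    _ ≤ (2/η)*(x^(-η)-(x+1)^(-η)) := by
        apply mul_le_mul_of_nonneg_left hcomb (by positivity)

lemma tail_sum {η : ℝ} (hη : 0 < η) (hη1 : η ≤ 1) (N : ℕ) (hN : 1 ≤ N) (t : Finset ℕ)
    (ht : ∀ n ∈ t, N ≤ n) :
    ∑ n ∈ t, ((n:ℝ) ^ (-(1+η))) ≤ (2/η) * (N:ℝ) ^ (-η) := by
  have hstep : ∀ n : ℕ, 1 ≤ n →
      ((n:ℝ) ^ (-(1+η))) ≤ (2/η) * ((n:ℝ)^(-η) - (((n:ℕ)+1:ℝ))^(-η)) := by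
    intro n hn
    exact rpow_tele (by exact_mod_cast hn) hη hη1
  rcases t.eq_empty_or_nonempty with rfl | hne
  · simp only [Finset.sum_empty]; positivity
  set M := t.sup id with hM
  have hNM : N ≤ M + 1 := by
    obtain ⟨n₀, hn₀⟩ := hne
    exact le_trans (ht n₀ hn₀) (Nat.le_succ_of_le (Finset.le_sup (f := id) hn₀))
  have htsub : t ⊆ Finset.Ico N (M+1) := by
    intro n hn
    rw [Finset.mem_Ico]
    exact ⟨ht n hn, Nat.lt_succ_of_le (Finset.le_sup (f := id) hn)⟩
  have hterm : ∀ n ∈ Finset.Ico N (M+1),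
      (0:ℝ) ≤ (2/η) * ((n:ℝ)^(-η) - (((n:ℕ)+1:ℝ))^(-η)) := by
    intro n hn
    have hn1 : 1 ≤ n := le_trans hN (Finset.mem_Ico.mp hn).1
    exact le_trans (by positivity) (hstep n hn1)
  calc ∑ n ∈ t, ((n:ℝ) ^ (-(1+η)))
      ≤ ∑ n ∈ t, (2/η) * ((n:ℝ)^(-η) - (((n:ℕ)+1:ℝ))^(-η)) := by
        apply Finset.sum_le_sum
        intro n hn
        exact hstep n (le_trans hN (ht n hn))
    _ ≤ ∑ n ∈ Finset.Ico N (M+1), (2/η) * ((n:ℝ)^(-η) - (((n:ℕ)+1:ℝ))^(-η)) :=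
        Finset.sum_le_sum_of_subset_of_nonneg htsub (fun n hn _ => hterm n hn)
    _ = (2/η) * ∑ n ∈ Finset.Ico N (M+1), ((n:ℝ)^(-η) - (((n:ℕ)+1:ℝ))^(-η)) := by
        rw [Finset.mul_sum]
    _ ≤ (2/η) * (N:ℝ)^(-η) := by
        have htel : ∑ n ∈ Finset.Ico N (M+1), ((n:ℝ)^(-η) - (((n:ℕ)+1:ℝ))^(-η))
            = (N:ℝ)^(-η) - ((M+1:ℕ):ℝ)^(-η) := by
          have hf : ∀ k : ℕ, (((k:ℕ)+1:ℝ))^(-η) = (((k+1:ℕ)):ℝ)^(-η) := by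
            intro k; push_cast; ring_nf
          have := Finset.sum_Ico_eq_sub (fun n : ℕ => ((n:ℝ)^(-η) - (((n+1:ℕ)):ℝ)^(-η))) hNM
          rw [Finset.sum_range_sub' (fun n : ℕ => ((n:ℝ)^(-η))),
            Finset.sum_range_sub' (fun n : ℕ => ((n:ℝ)^(-η)))] at this
          calc ∑ n ∈ Finset.Ico N (M+1), ((n:ℝ)^(-η) - (((n:ℕ)+1:ℝ))^(-η))
              = ∑ n ∈ Finset.Ico N (M+1), ((n:ℝ)^(-η) - (((n+1:ℕ)):ℝ)^(-η)) := by
                apply Finset.sum_congr rfl; intro n _; rw [hf]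
            _ = (N:ℝ)^(-η) - ((M+1:ℕ):ℝ)^(-η) := by rw [this]; ring
        rw [htel]
        have : (0:ℝ) ≤ ((M+1:ℕ):ℝ)^(-η) := Real.rpow_nonneg (by positivity) _
        nlinarith [div_pos (by norm_num : (0:ℝ) < 2) hη]
/-- Euclidean norm of a point of `ℤ³`. -/
noncomputable def znorm (k : Fin 3 → ℤ) : ℝ :=
  Real.sqrt (∑ i, ((k i : ℝ)) ^ 2)

/-- The quantity `⟨k⟩_ε = √(1 + ε⁻²·Q(2πε|k|))`. -/
noncomputable def brk (Q : ℝ → ℝ) (ε : ℝ) (k : Fin 3 → ℤ) : ℝ :=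
  Real.sqrt (1 + (ε ^ 2)⁻¹ * Q (2 * π * ε * znorm k))

/-- The quantity `⟨k⟩ = √(1 + 4π²|k|²)`. -/
noncomputable def jnorm (k : Fin 3 → ℤ) : ℝ :=
  Real.sqrt (1 + 4 * π ^ 2 * znorm k ^ 2)

lemma znorm_nonneg (ℓ : Fin 3 → ℤ) : 0 ≤ znorm ℓ := Real.sqrt_nonneg _

lemma sq_znorm (ℓ : Fin 3 → ℤ) : znorm ℓ ^ 2 = ∑ i, ((ℓ i : ℝ)) ^ 2 :=
  Real.sq_sqrt (by positivity)

lemma natAbs_sq_cast (a : ℤ) : ((a.natAbs : ℝ))^2 = ((a:ℝ))^2 := by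
  rw [Nat.cast_natAbs]
  push_cast
  rw [sq_abs]

lemma nsup_le_znorm (ℓ : Fin 3 → ℤ) : (nsup ℓ : ℝ) ≤ znorm ℓ := by
  have h2 : ((nsup ℓ : ℝ))^2 ≤ znorm ℓ^2 := by
    rw [sq_znorm]
    obtain ⟨i, _, hi⟩ := Finset.exists_mem_eq_sup Finset.univ
      (Finset.univ_nonempty) (fun i => (ℓ i).natAbs)
    calc ((nsup ℓ : ℝ))^2 = (((ℓ i).natAbs : ℝ))^2 := by rw [nsup, hi]
      _ = ((ℓ i : ℝ))^2 := natAbs_sq_cast _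
      _ ≤ ∑ j, ((ℓ j : ℝ))^2 :=
          Finset.single_le_sum (f := fun j => ((ℓ j : ℝ))^2) (fun j _ => sq_nonneg _)
            (Finset.mem_univ i)
  exact (pow_le_pow_iff_left₀ (by positivity) (znorm_nonneg ℓ) (by norm_num)).mp h2

lemma znorm_le_nsup (ℓ : Fin 3 → ℤ) : znorm ℓ ≤ Real.sqrt 3 * (nsup ℓ : ℝ) := by
  have h : ∑ i, ((ℓ i : ℝ))^2 ≤ 3 * ((nsup ℓ : ℝ))^2 := by
    have hb : ∀ i, ((ℓ i : ℝ))^2 ≤ ((nsup ℓ : ℝ))^2 := by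
      intro i
      rw [← natAbs_sq_cast]
      have : (ℓ i).natAbs ≤ nsup ℓ := Finset.le_sup (f := fun i => (ℓ i).natAbs) (Finset.mem_univ i)
      have h2 : ((ℓ i).natAbs : ℝ) ≤ (nsup ℓ : ℝ) := by exact_mod_cast this
      nlinarith [h2, Nat.cast_nonneg (α := ℝ) (ℓ i).natAbs]
    calc ∑ i, ((ℓ i : ℝ))^2 ≤ ∑ _i : Fin 3, ((nsup ℓ : ℝ))^2 :=
          Finset.sum_le_sum (fun i _ => hb i)
      _ = 3 * ((nsup ℓ : ℝ))^2 := by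
          rw [Finset.sum_const, Finset.card_univ, Fintype.card_fin, nsmul_eq_mul]
          push_cast; ring
  calc znorm ℓ = Real.sqrt (∑ i, ((ℓ i : ℝ))^2) := rfl
    _ ≤ Real.sqrt (3 * ((nsup ℓ : ℝ))^2) := Real.sqrt_le_sqrt h
    _ = Real.sqrt 3 * (nsup ℓ : ℝ) := by
        rw [Real.sqrt_mul (by norm_num), Real.sqrt_sq (by positivity)]

lemma T1bound (R : ℝ) (hR : 1 ≤ R) :
    ∑' ℓ : {ℓ : Fin 3 → ℤ // R < znorm ℓ}, (jnorm ℓ.1 ^ 4)⁻¹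
      ≤ (27 * Real.sqrt 3 / (2*π^4)) / R := by
  classical
  have hπ : (0:ℝ) < π := Real.pi_pos
  have hR0 : (0:ℝ) < R := lt_of_lt_of_le one_pos hR
  have hs3 : (0:ℝ) < Real.sqrt 3 := by positivity
  set N₀ : ℕ := Nat.floor (R / Real.sqrt 3) + 1 with hN₀def
  have hN₀R : R / Real.sqrt 3 < (N₀ : ℝ) := by
    rw [hN₀def]; push_cast; exact Nat.lt_floor_add_one _
  have hN₀1 : 1 ≤ N₀ := Nat.le_add_left 1 _
  set g : ℕ → ℝ := fun n => if N₀ ≤ n then (16*π^4)⁻¹ * (((n:ℝ))^4)⁻¹ else 0 with hgdef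
  have hg0 : ∀ n, 0 ≤ g n := by
    intro n; rw [hgdef]; dsimp only; split <;> positivity
  have hA0 : (0:ℝ) ≤ (27 * Real.sqrt 3 / (2*π^4)) / R := by positivity
  apply tsum_le_of_sum_le' hA0
  intro s
  have himg : ∑ ℓ ∈ s.image Subtype.val, (jnorm ℓ ^ 4)⁻¹
      = ∑ x ∈ s, (jnorm x.1 ^ 4)⁻¹ :=
    Finset.sum_image (fun x _ y _ h => Subtype.ext h)
  rw [← himg]
  apply shell_sum_le _ g hg0 _ ?hbound _ ?hfg
  case hfg =>
    intro ℓ hℓ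
    obtain ⟨x, hx, rfl⟩ := Finset.mem_image.mp hℓ
    have hzn : R < znorm x.1 := x.2
    have h1 : R / Real.sqrt 3 < (nsup x.1 : ℝ) := by
      rw [div_lt_iff₀ hs3]
      calc R < znorm x.1 := hzn
        _ ≤ Real.sqrt 3 * (nsup x.1 : ℝ) := znorm_le_nsup x.1
        _ = (nsup x.1 : ℝ) * Real.sqrt 3 := mul_comm _ _
    have hN₀le : N₀ ≤ nsup x.1 := by
      have := (Nat.floor_lt (by positivity)).mpr h1
      omega
    have hns1 : (1:ℝ) ≤ (nsup x.1 : ℝ) := by exact_mod_cast le_trans hN₀1 hN₀le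
    have hj : jnorm x.1 ^ 4 = (1 + 4*π^2*znorm x.1^2)^2 := by
      have h14 : (0:ℝ) ≤ 1 + 4*π^2*znorm x.1^2 := by positivity
      rw [jnorm, show ∀ y:ℝ, y^4 = (y^2)^2 from fun y => by ring, Real.sq_sqrt h14]
    rw [hgdef]; dsimp only
    rw [if_pos hN₀le, hj]
    have hsq : ((nsup x.1 : ℝ))^2 ≤ znorm x.1^2 := by
      nlinarith [nsup_le_znorm x.1, znorm_nonneg x.1, Nat.cast_nonneg (α := ℝ) (nsup x.1)]
    have hπ2 : (0:ℝ) < π^2 := by positivity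
    have hmid : 4*π^2*((nsup x.1 : ℝ))^2 ≤ 1 + 4*π^2*znorm x.1^2 := by nlinarith
    have hlow : 16*π^4 * ((nsup x.1 : ℝ))^4 ≤ (1 + 4*π^2*znorm x.1^2)^2 := by
      have := pow_le_pow_left₀ (by positivity) hmid 2
      calc 16*π^4 * ((nsup x.1 : ℝ))^4 = (4*π^2*((nsup x.1 : ℝ))^2)^2 := by ring
        _ ≤ (1 + 4*π^2*znorm x.1^2)^2 := this
    calc ((1 + 4*π^2*znorm x.1^2)^2)⁻¹
        ≤ (16*π^4 * ((nsup x.1 : ℝ))^4)⁻¹ :=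
          inv_anti₀ (by positivity) hlow
      _ = (16*π^4)⁻¹ * (((nsup x.1 : ℝ))^4)⁻¹ := by rw [mul_inv]
  case hbound =>
    intro t
    classical
    have hsplit : ∀ n ∈ t, 27*((n:ℝ)+1)^2 * g n
        = if N₀ ≤ n then 27*((n:ℝ)+1)^2 * ((16*π^4)⁻¹ * (((n:ℝ))^4)⁻¹) else 0 := by
      intro n _; rw [hgdef]; dsimp only; split
      · rfl
      · rw [mul_zero]
    rw [Finset.sum_congr rfl hsplit, ← Finset.sum_filter]
    set t₁ := t.filter (fun n => N₀ ≤ n) with ht₁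
    have hterm : ∀ n ∈ t₁, 27*((n:ℝ)+1)^2 * ((16*π^4)⁻¹ * (((n:ℝ))^4)⁻¹)
        ≤ (27/(4*π^4)) * ((n:ℝ) ^ (-(1+(1:ℝ)))) := by
      intro n hn
      have hn1 : 1 ≤ n := le_trans hN₀1 (Finset.mem_filter.mp hn).2
      have hn1' : (1:ℝ) ≤ (n:ℝ) := by exact_mod_cast hn1
      have hnn : (0:ℝ) < (n:ℝ) := by linarith
      have hrw : (n:ℝ) ^ (-(1+(1:ℝ))) = (((n:ℝ))^2)⁻¹ := by
        rw [show (-(1+(1:ℝ))) = -((2:ℕ):ℝ) by norm_num, Real.rpow_neg hnn.le,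
          Real.rpow_natCast]
      rw [hrw]
      have h4 : ((n:ℝ)+1)^2 ≤ 4*((n:ℝ))^2 := by nlinarith
      have e1 : 27*((n:ℝ)+1)^2 * ((16*π^4)⁻¹ * (((n:ℝ))^4)⁻¹)
          = (27*((n:ℝ)+1)^2) / (16*π^4*(n:ℝ)^4) := by
        field_simp
      have e2 : (27/(4*π^4)) * (((n:ℝ))^2)⁻¹ = 27 / (4*π^4*(n:ℝ)^2) := by
        field_simp
      rw [e1, e2, div_le_div_iff₀ (by positivity) (by positivity)]
      nlinarith [mul_le_mul_of_nonneg_left h4 (by positivity : (0:ℝ) ≤ 27*(4*π^4*(n:ℝ)^2))]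
    have htail := tail_sum (η := 1) one_pos le_rfl N₀ hN₀1 t₁
      (fun n hn => (Finset.mem_filter.mp hn).2)
    have hN₀pos : (0:ℝ) < (N₀:ℝ) := by exact_mod_cast hN₀1
    have hfin : ((N₀:ℝ))⁻¹ ≤ Real.sqrt 3 / R := by
      rw [inv_eq_one_div, div_le_div_iff₀ hN₀pos hR0]
      rw [div_lt_iff₀ hs3] at hN₀R
      nlinarith
    calc ∑ n ∈ t₁, 27*((n:ℝ)+1)^2 * ((16*π^4)⁻¹ * (((n:ℝ))^4)⁻¹)
        ≤ ∑ n ∈ t₁, (27/(4*π^4)) * ((n:ℝ) ^ (-(1+(1:ℝ)))) := Finset.sum_le_sum hterm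
      _ = (27/(4*π^4)) * ∑ n ∈ t₁, ((n:ℝ) ^ (-(1+(1:ℝ)))) := by rw [Finset.mul_sum]
      _ ≤ (27/(4*π^4)) * (2/1 * (N₀:ℝ) ^ (-(1:ℝ))) :=
          mul_le_mul_of_nonneg_left htail (by positivity)
      _ = (27/(2*π^4)) * ((N₀:ℝ))⁻¹ := by rw [Real.rpow_neg_one]; ring
      _ ≤ (27/(2*π^4)) * (Real.sqrt 3 / R) :=
          mul_le_mul_of_nonneg_left hfin (by positivity)
      _ = (27 * Real.sqrt 3 / (2*π^4)) / R := by ring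

set_option maxHeartbeats 2000000 in
lemma T2bound (Q : ℝ → ℝ) (c η q : ℝ) (hc : 0 < c) (hη : 0 < η) (hη1 : η ≤ 1) (hq : 0 < q)
    (hQnn : ∀ z, 0 ≤ z → 0 ≤ Q z)
    (hquadg : ∀ z, 0 ≤ z → q * z^2 ≤ Q z)
    (hgrow : ∀ z, 1 ≤ z → c * z^(3+η) ≤ Q z)
    (ε : ℝ) (hε0 : 0 < ε) (hε1 : ε ≤ 1) :
    ∑' ℓ : Fin 3 → ℤ, (brk Q ε ℓ ^ 2)⁻¹ ≤
      (27*(1+1/(π^2*q))*(1/(2*π)+1) + 216/(η*c*(2*π)^3)) / ε := by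
  classical
  have hπ : (0:ℝ) < π := Real.pi_pos
  set z := 2*π*ε with hzdef
  have hz0 : (0:ℝ) < z := by rw [hzdef]; positivity
  set K : ℝ := 1+1/(π^2*q) with hKdef
  have hK1 : (1:ℝ) ≤ K := by
    have h0 : 0 < 1/(π^2*q) := by positivity
    rw [hKdef]; linarith
  set N₁ : ℕ := Nat.floor (1/z) + 1 with hN₁def
  have hN₁R : 1/z < (N₁ : ℝ) := by rw [hN₁def]; push_cast; exact Nat.lt_floor_add_one _
  have hN₁1 : 1 ≤ N₁ := Nat.le_add_left 1 _
  set g : ℕ → ℝ := fun n => if (n:ℝ) ≤ 1/z then (1+4*π^2*q*(n:ℝ)^2)⁻¹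
    else ε^2 * c⁻¹ * ((z*(n:ℝ)) ^ (-(3+η))) with hgdef
  have hg0 : ∀ n, 0 ≤ g n := by
    intro n; rw [hgdef]; dsimp only; split
    · positivity
    · have := Real.rpow_nonneg (by positivity : (0:ℝ) ≤ z*(n:ℝ)) (-(3+η))
      positivity
  apply tsum_le_of_sum_le' (by positivity)
  intro s
  apply shell_sum_le _ g hg0 _ ?hbound s ?hfg
  case hfg =>
    intro ℓ _
    have hzn0 : 0 ≤ znorm ℓ := znorm_nonneg ℓ
    have harg : 0 ≤ z * znorm ℓ := by positivity
    have hbrk : brk Q ε ℓ ^ 2 = 1 + (ε^2)⁻¹ * Q (z * znorm ℓ) := by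
      rw [brk, hzdef]
      exact Real.sq_sqrt (by
        have := hQnn _ (by positivity : (0:ℝ) ≤ 2*π*ε*znorm ℓ)
        positivity)
    rw [hbrk, hgdef]; dsimp only
    have hns := nsup_le_znorm ℓ
    have hnn0 : (0:ℝ) ≤ (nsup ℓ : ℝ) := Nat.cast_nonneg _
    split_ifs with hcond
    · -- small branch
      apply inv_anti₀ (by positivity)
      have h1 : q * (z*znorm ℓ)^2 ≤ Q (z*znorm ℓ) := hquadg _ harg
      have hzz : ((nsup ℓ:ℝ))^2 ≤ znorm ℓ^2 := by nlinarith
      have he : (ε^2)⁻¹ * (q * (z*znorm ℓ)^2) = 4*π^2*q*znorm ℓ^2 := by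
        rw [hzdef]; field_simp; ring
      have h2 : 4*π^2*q*((nsup ℓ:ℝ))^2 ≤ (ε^2)⁻¹ * Q (z*znorm ℓ) := by
        calc 4*π^2*q*((nsup ℓ:ℝ))^2 ≤ 4*π^2*q*znorm ℓ^2 := by
              nlinarith [mul_le_mul_of_nonneg_left hzz (by positivity : (0:ℝ) ≤ 4*π^2*q)]
          _ = (ε^2)⁻¹ * (q * (z*znorm ℓ)^2) := he.symm
          _ ≤ (ε^2)⁻¹ * Q (z*znorm ℓ) :=
              mul_le_mul_of_nonneg_left h1 (by positivity)
      linarith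
    · -- large branch
      push_neg at hcond
      have hz1 : 1 < z * (nsup ℓ:ℝ) := by
        rw [div_lt_iff₀ hz0] at hcond
        nlinarith
      have hzzn : z * (nsup ℓ:ℝ) ≤ z * znorm ℓ := mul_le_mul_of_nonneg_left hns hz0.le
      have h1g : 1 ≤ z * znorm ℓ := le_trans hz1.le hzzn
      have hQg : c * (z*znorm ℓ)^(3+η) ≤ Q (z*znorm ℓ) := hgrow _ h1g
      have hrp : (0:ℝ) < (z*znorm ℓ)^(3+η) := Real.rpow_pos_of_pos (by linarith) _
      have hQpos : 0 < Q (z*znorm ℓ) := lt_of_lt_of_le (by positivity) hQg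
      have hzns0 : (0:ℝ) < z * (nsup ℓ:ℝ) := by linarith
      rw [Real.rpow_neg hzns0.le]
      have step1 : (1 + (ε^2)⁻¹ * Q (z*znorm ℓ))⁻¹
          ≤ ((ε^2)⁻¹ * (c * (z*znorm ℓ)^(3+η)))⁻¹ := by
        apply inv_anti₀ (by positivity)
        have := mul_le_mul_of_nonneg_left hQg (by positivity : (0:ℝ) ≤ (ε^2)⁻¹)
        linarith
      have step2 : ((ε^2)⁻¹ * (c * (z*znorm ℓ)^(3+η)))⁻¹
          = ε^2 * c⁻¹ * ((z*znorm ℓ)^(3+η))⁻¹ := by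
        rw [mul_inv, mul_inv, inv_inv]; ring
      have step3 : ((z*znorm ℓ)^(3+η))⁻¹ ≤ ((z*(nsup ℓ:ℝ))^(3+η))⁻¹ := by
        apply inv_anti₀ (Real.rpow_pos_of_pos hzns0 _)
        exact Real.rpow_le_rpow hzns0.le hzzn (by linarith)
      calc (1 + (ε^2)⁻¹ * Q (z*znorm ℓ))⁻¹
          ≤ ε^2 * c⁻¹ * ((z*znorm ℓ)^(3+η))⁻¹ := by rw [← step2]; exact step1
        _ ≤ ε^2 * c⁻¹ * ((z*(nsup ℓ:ℝ))^(3+η))⁻¹ :=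
            mul_le_mul_of_nonneg_left step3 (by positivity)
  case hbound =>
    intro t
    rw [← Finset.sum_filter_add_sum_filter_not t (fun n : ℕ => (n:ℝ) ≤ 1/z)]
    have hA1 : ∑ n ∈ t.filter (fun n : ℕ => (n:ℝ) ≤ 1/z), 27*((n:ℝ)+1)^2 * g n
        ≤ 27*K*(1/(2*π)+1)/ε := by
      set t₁ := t.filter (fun n : ℕ => (n:ℝ) ≤ 1/z) with ht₁
      have hterm : ∀ n ∈ t₁, 27*((n:ℝ)+1)^2 * g n ≤ 27*K := by
        intro n hn
        have hcond : (n:ℝ) ≤ 1/z := (Finset.mem_filter.mp hn).2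
        rw [hgdef]; dsimp only; rw [if_pos hcond]
        rcases Nat.eq_zero_or_pos n with rfl | hn1
        · norm_num; linarith
        · have hn1' : (1:ℝ) ≤ (n:ℝ) := by exact_mod_cast hn1
          have h4 : ((n:ℝ)+1)^2 ≤ 4*((n:ℝ))^2 := by nlinarith
          have hinv : (1+4*π^2*q*(n:ℝ)^2)⁻¹ ≤ (4*π^2*q*(n:ℝ)^2)⁻¹ := by
            apply inv_anti₀ (by positivity); linarith
          calc 27*((n:ℝ)+1)^2 * (1+4*π^2*q*(n:ℝ)^2)⁻¹
              ≤ 27*(4*((n:ℝ))^2) * (4*π^2*q*(n:ℝ)^2)⁻¹ := by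
                apply mul_le_mul (by nlinarith) hinv (by positivity) (by positivity)
            _ = 27/(π^2*q) := by field_simp
            _ ≤ 27*K := by
                rw [hKdef]
                have h0 : 0 < π^2*q := by positivity
                rw [div_eq_mul_inv, mul_add, mul_one, one_div]
                nlinarith [mul_pos (by norm_num : (0:ℝ) < 27) (inv_pos.mpr h0)]
      have hcard : t₁.card ≤ N₁ := by
        have hsub : t₁ ⊆ Finset.range N₁ := by
          intro n hn
          rw [Finset.mem_range, hN₁def]
          have hcond : (n:ℝ) ≤ 1/z := (Finset.mem_filter.mp hn).2
          have := Nat.le_floor hcond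
          omega
        calc t₁.card ≤ (Finset.range N₁).card := Finset.card_le_card hsub
          _ = N₁ := Finset.card_range N₁
      have hsum := Finset.sum_le_card_nsmul t₁ _ _ hterm
      rw [nsmul_eq_mul] at hsum
      have hN₁le : (N₁:ℝ) ≤ 1/z + 1 := by
        rw [hN₁def]; push_cast
        have := Nat.floor_le (by positivity : (0:ℝ) ≤ 1/z)
        linarith
      have hez : 1/z + 1 ≤ (1/(2*π)+1)/ε := by
        have hinvε : 1 ≤ 1/ε := by rw [le_div_iff₀ hε0]; linarith
        have e : 1/z = (1/(2*π)) * (1/ε) := by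
          rw [hzdef, one_div, one_div, one_div, mul_inv]
        have e2 : (1/(2*π)+1)/ε = (1/(2*π))*(1/ε) + 1/ε := by
          field_simp
        rw [e, e2]
        linarith
      calc ∑ n ∈ t₁, 27*((n:ℝ)+1)^2 * g n ≤ (t₁.card : ℝ) * (27*K) := hsum
        _ ≤ (N₁:ℝ) * (27*K) := by
            apply mul_le_mul_of_nonneg_right (by exact_mod_cast hcard) (by positivity)
        _ ≤ ((1/(2*π)+1)/ε) * (27*K) := by
            apply mul_le_mul_of_nonneg_right (le_trans hN₁le hez) (by positivity)
        _ = 27*K*(1/(2*π)+1)/ε := by ring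
    have hA2 : ∑ n ∈ t.filter (fun n : ℕ => ¬((n:ℝ) ≤ 1/z)), 27*((n:ℝ)+1)^2 * g n
        ≤ 216/(η*c*(2*π)^3)/ε := by
      set t₂ := t.filter (fun n : ℕ => ¬((n:ℝ) ≤ 1/z)) with ht₂
      have hmem : ∀ n ∈ t₂, N₁ ≤ n ∧ 1 ≤ n := by
        intro n hn
        have hcond : ¬((n:ℝ) ≤ 1/z) := (Finset.mem_filter.mp hn).2
        push_neg at hcond
        have h2 : Nat.floor (1/z) < n := by
          by_contra h
          push_neg at h
          have : (n:ℝ) ≤ Nat.floor (1/z) := by exact_mod_cast h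
          have := Nat.floor_le (by positivity : (0:ℝ) ≤ 1/z)
          linarith
        constructor
        · rw [hN₁def]; omega
        · omega
      have hterm : ∀ n ∈ t₂, 27*((n:ℝ)+1)^2 * g n
          ≤ (108 * ε^2 * c⁻¹ * (z ^ (-(3+η)))) * ((n:ℝ) ^ (-(1+η))) := by
        intro n hn
        obtain ⟨hNn, hn1⟩ := hmem n hn
        have hn1' : (1:ℝ) ≤ (n:ℝ) := by exact_mod_cast hn1
        have hnn : (0:ℝ) < (n:ℝ) := by linarith
        have hcond : ¬((n:ℝ) ≤ 1/z) := (Finset.mem_filter.mp hn).2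
        rw [hgdef]; dsimp only; rw [if_neg hcond]
        have hsplitrp : (z*(n:ℝ)) ^ (-(3+η)) = z ^ (-(3+η)) * (n:ℝ) ^ (-(3+η)) :=
          Real.mul_rpow hz0.le hnn.le
        have hnrp : ((n:ℝ))^2 * (n:ℝ) ^ (-(3+η)) = (n:ℝ) ^ (-(1+η)) := by
          rw [← Real.rpow_natCast (n:ℝ) 2, ← Real.rpow_add hnn]
          congr 1
          push_cast
          ring
        have h4 : ((n:ℝ)+1)^2 ≤ 4*((n:ℝ))^2 := by nlinarith
        have hrpn : (0:ℝ) ≤ (n:ℝ) ^ (-(3+η)) := Real.rpow_nonneg hnn.le _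
        have hrpz : (0:ℝ) ≤ z ^ (-(3+η)) := Real.rpow_nonneg hz0.le _
        calc 27*((n:ℝ)+1)^2 * (ε^2 * c⁻¹ * ((z*(n:ℝ)) ^ (-(3+η))))
            = 27*((n:ℝ)+1)^2 * ε^2 * c⁻¹ * z ^ (-(3+η)) * (n:ℝ) ^ (-(3+η)) := by
              rw [hsplitrp]; ring
          _ ≤ 27*(4*((n:ℝ))^2) * ε^2 * c⁻¹ * z ^ (-(3+η)) * (n:ℝ) ^ (-(3+η)) := by
              have hfac : (0:ℝ) ≤ 27 * ε^2 * c⁻¹ * z ^ (-(3+η)) * (n:ℝ) ^ (-(3+η)) := by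
                positivity
              nlinarith [mul_le_mul_of_nonneg_left h4 hfac]
          _ = (108 * ε^2 * c⁻¹ * (z ^ (-(3+η)))) * (((n:ℝ))^2 * (n:ℝ) ^ (-(3+η))) := by
              ring
          _ = (108 * ε^2 * c⁻¹ * (z ^ (-(3+η)))) * ((n:ℝ) ^ (-(1+η))) := by rw [hnrp]
      have htail := tail_sum hη hη1 N₁ hN₁1 t₂ (fun n hn => (hmem n hn).1)
      have hNz : (N₁:ℝ) ^ (-η) ≤ z ^ η := by
        have h1 : (N₁:ℝ) ^ (-η) ≤ (1/z) ^ (-η) := by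
          rw [Real.rpow_neg (by positivity), Real.rpow_neg (by positivity)]
          apply inv_anti₀ (Real.rpow_pos_of_pos (by positivity) _)
          exact Real.rpow_le_rpow (by positivity) hN₁R.le hη.le
        have h2 : ((1/z):ℝ) ^ (-η) = z ^ η := by
          rw [one_div, Real.inv_rpow hz0.le, Real.rpow_neg hz0.le, inv_inv]
        linarith [h1.trans_eq h2]
      have hzz3 : z ^ (-(3+η)) * z ^ η = (z^(3:ℕ))⁻¹ := by
        rw [← Real.rpow_add hz0, show (-(3+η)+η) = -((3:ℕ):ℝ) by push_cast; ring,
          Real.rpow_neg hz0.le, Real.rpow_natCast]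
      have hfinal : (108 * ε^2 * c⁻¹ * (z ^ (-(3+η)))) * ((2/η) * (N₁:ℝ) ^ (-η))
          ≤ 216/(η*c*(2*π)^3)/ε := by
        have hb : (108 * ε^2 * c⁻¹ * (z ^ (-(3+η)))) * ((2/η) * (N₁:ℝ) ^ (-η))
            ≤ (108 * ε^2 * c⁻¹ * (z ^ (-(3+η)))) * ((2/η) * z ^ η) := by
          apply mul_le_mul_of_nonneg_left _ (by positivity)
          apply mul_le_mul_of_nonneg_left hNz (by positivity)
        have he : (108 * ε^2 * c⁻¹ * (z ^ (-(3+η)))) * ((2/η) * z ^ η)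
            = 216/(η*c*(2*π)^3)/ε := by
          have : (108 * ε^2 * c⁻¹ * (z ^ (-(3+η)))) * ((2/η) * z ^ η)
              = 216 * ε^2 * c⁻¹ * (1/η) * (z ^ (-(3+η)) * z ^ η) := by ring
          rw [this, hzz3, hzdef]
          have hεne : ε ≠ 0 := ne_of_gt hε0
          have hπne : π ≠ 0 := Real.pi_ne_zero
          field_simp
        linarith
      calc ∑ n ∈ t₂, 27*((n:ℝ)+1)^2 * g n
          ≤ ∑ n ∈ t₂, (108 * ε^2 * c⁻¹ * (z ^ (-(3+η)))) * ((n:ℝ) ^ (-(1+η))) :=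
            Finset.sum_le_sum hterm
        _ = (108 * ε^2 * c⁻¹ * (z ^ (-(3+η)))) * ∑ n ∈ t₂, ((n:ℝ) ^ (-(1+η))) := by
            rw [Finset.mul_sum]
        _ ≤ (108 * ε^2 * c⁻¹ * (z ^ (-(3+η)))) * ((2/η) * (N₁:ℝ) ^ (-η)) := by
            apply mul_le_mul_of_nonneg_left htail (by positivity)
        _ ≤ 216/(η*c*(2*π)^3)/ε := hfinal
    have := add_le_add hA1 hA2
    rw [← add_div] at this
    exact this

set_option maxHeartbeats 2000000 in
/-- for every `m ≥ 1` there exists `C > 0` such that for all `ε ∈ (0,1]` and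
`Λ ≥ 1`:
`ε^{2(m−1)}·(Σ_{|ℓ| > Λ/ε} ⟨ℓ⟩^{−4})·(Σ_ℓ ⟨ℓ⟩_ε^{−2})^{2m−1} ≤ C/Λ`. -/
theorem stmt_10 (Q : ℝ → ℝ) (c η : ℝ) (hc : 0 < c) (hη : 0 < η)
    (hQcont : ContinuousOn Q (Set.Ici 0))
    (hQ0 : Q 0 = 0)
    (hquad : ∀ Λ : ℝ, 0 < Λ → ∃ C : ℝ, 0 < C ∧ ∀ z ∈ Set.Icc (0:ℝ) Λ, |Q z - z ^ 2| ≤ C * z ^ 4)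
    (hpos : ∀ z : ℝ, 0 < z → 0 < Q z)
    (hgrowth : ∀ z : ℝ, 1 ≤ z → c * z ^ (3 + η) ≤ Q z) :
    ∀ m : ℕ, 1 ≤ m → ∃ C : ℝ, 0 < C ∧
      ∀ ε ∈ Set.Ioc (0:ℝ) 1, ∀ Λ : ℝ, 1 ≤ Λ →
        ε ^ (2 * (m - 1)) *
            (∑' ℓ : {ℓ : Fin 3 → ℤ // Λ / ε < znorm ℓ}, (jnorm ℓ.1 ^ 4)⁻¹) *
            (∑' ℓ : Fin 3 → ℤ, (brk Q ε ℓ ^ 2)⁻¹) ^ (2 * m - 1) ≤ C / Λ := by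
  have hπ : (0:ℝ) < π := Real.pi_pos
  have hQnn : ∀ z : ℝ, 0 ≤ z → 0 ≤ Q z := by
    intro z hz
    rcases eq_or_lt_of_le hz with h | h
    · rw [← h, hQ0]
    · exact (hpos z h).le
  set η' := min η 1 with hη'def
  have hη'0 : 0 < η' := lt_min hη one_pos
  have hη'1 : η' ≤ 1 := min_le_right _ _
  have hgrowth' : ∀ z : ℝ, 1 ≤ z → c * z ^ (3 + η') ≤ Q z := by
    intro z hz
    have h1 : z ^ (3 + η') ≤ z ^ (3 + η) :=
      Real.rpow_le_rpow_of_exponent_le hz (by have := min_le_left η 1; linarith)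
    calc c * z ^ (3+η') ≤ c * z ^ (3+η) := mul_le_mul_of_nonneg_left h1 hc.le
      _ ≤ Q z := hgrowth z hz
  obtain ⟨C₀, hC₀, hC₀b⟩ := hquad 1 one_pos
  set z₀ := min 1 (1 / Real.sqrt (2*C₀)) with hz₀def
  have hz₀0 : 0 < z₀ := lt_min one_pos (by positivity)
  have hz₀1 : z₀ ≤ 1 := min_le_left _ _
  have hsmall : ∀ z ∈ Set.Icc (0:ℝ) z₀, (1/2) * z^2 ≤ Q z := by
    intro z hz
    obtain ⟨hz0, hzz₀⟩ := hz
    have hz1 : z ≤ 1 := le_trans hzz₀ hz₀1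
    have habs := hC₀b z ⟨hz0, hz1⟩
    have h1 : z ≤ 1 / Real.sqrt (2*C₀) := le_trans hzz₀ (min_le_right _ _)
    have h2 : z^2 ≤ (1/Real.sqrt (2*C₀))^2 := pow_le_pow_left₀ hz0 h1 2
    have h3 : (1/Real.sqrt (2*C₀))^2 = 1/(2*C₀) := by
      rw [div_pow, one_pow, Real.sq_sqrt (by positivity)]
    have h4 : z^2 ≤ 1/(2*C₀) := h2.trans_eq h3
    have h5 : z^2 * (2*C₀) ≤ 1 := (le_div_iff₀ (by positivity)).mp h4
    have h6 : C₀ * z^4 ≤ (1/2) * z^2 := by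
      nlinarith [mul_le_mul_of_nonneg_right h5 (sq_nonneg z)]
    have h7 := (abs_le.mp habs).1
    linarith
  obtain ⟨x₀, hx₀mem, hx₀min⟩ := (isCompact_Icc (a := z₀) (b := 1)).exists_isMinOn
    (Set.nonempty_Icc.mpr hz₀1)
    (hQcont.mono (fun x hx => le_trans hz₀0.le hx.1))
  have hq₀ : 0 < Q x₀ := hpos x₀ (lt_of_lt_of_le hz₀0 hx₀mem.1)
  set q := min (min (1/2) (Q x₀)) c with hqdef
  have hq0 : 0 < q := lt_min (lt_min one_half_pos hq₀) hc
  have hquadg : ∀ z : ℝ, 0 ≤ z → q * z^2 ≤ Q z := by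
    intro z hz
    have hq12 : q ≤ 1/2 := le_trans (min_le_left _ _) (min_le_left _ _)
    rcases le_or_gt z z₀ with h | h
    · calc q*z^2 ≤ (1/2)*z^2 := by nlinarith [sq_nonneg z]
        _ ≤ Q z := hsmall z ⟨hz, h⟩
    · rcases le_or_gt z 1 with h1 | h1
      · have hmin : Q x₀ ≤ Q z := (isMinOn_iff.mp hx₀min) z ⟨h.le, h1⟩
        have hz2 : z^2 ≤ 1 := by nlinarith
        have hqq₀ : q ≤ Q x₀ := le_trans (min_le_left _ _) (min_le_right _ _)
        nlinarith [mul_le_mul hqq₀ hz2 (sq_nonneg z) hq₀.le]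
      · have hg := hgrowth' z h1.le
        have hz2 : z^((2:ℕ):ℝ) ≤ z^(3+η') :=
          Real.rpow_le_rpow_of_exponent_le h1.le (by push_cast; linarith [hη'0])
        have hz2' : z^((2:ℕ):ℝ) = z^2 := Real.rpow_natCast z 2
        have hqc : q ≤ c := min_le_right _ _
        have h5 : c * z^2 ≤ Q z := by
          rw [← hz2']
          calc c * z^((2:ℕ):ℝ) ≤ c * z^(3+η') := mul_le_mul_of_nonneg_left hz2 hc.le
            _ ≤ Q z := hg
        nlinarith [h5, sq_nonneg z]
  intro m hm
  obtain ⟨k, rfl⟩ : ∃ k, m = k + 1 := ⟨m - 1, (Nat.succ_pred_eq_of_pos hm).symm⟩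
  set C₁ := 27 * Real.sqrt 3 / (2*π^4) with hC₁def
  set C₂ := 27*(1+1/(π^2*q))*(1/(2*π)+1) + 216/(η'*c*(2*π)^3) with hC₂def
  have hC₁0 : 0 < C₁ := by rw [hC₁def]; positivity
  have hC₂0 : 0 < C₂ := by rw [hC₂def]; positivity
  refine ⟨C₁ * C₂ ^ (2*(k+1)-1), by positivity, ?_⟩
  intro ε hε Λ hΛ
  obtain ⟨hε0, hε1⟩ := hε
  have hΛ0 : (0:ℝ) < Λ := lt_of_lt_of_le one_pos hΛ
  have hR1 : 1 ≤ Λ/ε := by rw [le_div_iff₀ hε0]; nlinarith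
  have h1 := T1bound (Λ/ε) hR1
  have h2 := T2bound Q c η' q hc hη'0 hη'1 hq0 hQnn hquadg hgrowth' ε hε0 hε1
  rw [← hC₂def] at h2
  have h1' : (∑' ℓ : {ℓ : Fin 3 → ℤ // Λ / ε < znorm ℓ}, (jnorm ℓ.1 ^ 4)⁻¹)
      ≤ C₁ * ε / Λ := by
    have he : C₁ / (Λ/ε) = C₁ * ε / Λ := by
      field_simp
    rw [← he, hC₁def]
    exact h1
  have hT1n : 0 ≤ ∑' ℓ : {ℓ : Fin 3 → ℤ // Λ / ε < znorm ℓ}, (jnorm ℓ.1 ^ 4)⁻¹ :=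
    tsum_nonneg (fun x => inv_nonneg.mpr (pow_nonneg (Real.sqrt_nonneg _) 4))
  have hT2n : 0 ≤ ∑' ℓ : Fin 3 → ℤ, (brk Q ε ℓ ^ 2)⁻¹ :=
    tsum_nonneg (fun x => inv_nonneg.mpr (pow_nonneg (Real.sqrt_nonneg _) 2))
  have hexp1 : 2*(k+1) - 1 = 2*k+1 := by omega
  have hexp2 : 2*((k+1) - 1) = 2*k := by omega
  rw [hexp1, hexp2]
  have hεne : ε ≠ 0 := ne_of_gt hε0
  have hΛne : Λ ≠ 0 := ne_of_gt hΛ0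
  calc ε^(2*k) * (∑' ℓ : {ℓ : Fin 3 → ℤ // Λ / ε < znorm ℓ}, (jnorm ℓ.1 ^ 4)⁻¹) *
        (∑' ℓ : Fin 3 → ℤ, (brk Q ε ℓ ^ 2)⁻¹) ^ (2*k+1)
      ≤ ε^(2*k) * (C₁ * ε / Λ) * (C₂/ε) ^ (2*k+1) := by
        apply mul_le_mul
        · exact mul_le_mul_of_nonneg_left h1' (pow_nonneg hε0.le _)
        · exact pow_le_pow_left₀ hT2n h2 _
        · exact pow_nonneg hT2n _
        · positivity
    _ = C₁ * C₂^(2*k+1) / Λ := by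
        rw [div_pow]
        field_simp
        ring
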